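/- arXiv:2103.06468 — 2 statements merged into one kernel-verified Lean document; each statement's English description precedes it below -/
import Mathlib

section
/- Let H be a complete r-uniform r-partite hypergraph and J = I(H) its edge ideal. Then J^(n) = J^n for all n ≥ 1. -/
open MvPolynomial

noncomputable def symbolicPower {R : Type*} [CommRing R] (I : Ideal R) (n : ℕ) : Ideal R :=
  sInf { J : Ideal R | ∃ (p : Ideal R) (hp : p.IsPrime),
    p ∈ associatedPrimes R (R ⧸ I) ∧
    J = Ideal.comap (algebraMap R (Localization (@Ideal.primeCompl R _ p hp)))
        (Ideal.map (algebraMap R (Localization (@Ideal.primeCompl R _ p hp))) (I ^ n)) }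

noncomputable def edgeIdeal (k : Type*) {V : Type*} [CommRing k] [DecidableEq V]
    (E : Finset (Finset V)) : Ideal (MvPolynomial V k) :=
  Ideal.span ((fun e : Finset V => ∏ x ∈ e, (X x : MvPolynomial V k)) '' ↑E)

/-!
Write `P i` for the ideal generated by the variables of the part `Xp i`. Completeness of the
hypergraph gives `J = ∏ i, P i`. A polynomial lies in `P i ^ n` iff each of its monomials has
degree at least `n` in the variables of `Xp i`, i.e. iff its weighted order for the indicator
weight of `Xp i` is at least `n`. That order is additive over a domain, so `P i ^ n` is
`P i`-primary, and splitting monomials along the partition gives `⨅ i, P i ^ n = ∏ i, P i ^ n`.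
Each `P i` is an associated prime of `R ⧸ J`, the annihilator of a product of one variable from
every other part, so `J⁽ⁿ⁾ ≤ ⨅ i, P i ^ n = J ^ n`. If some part is empty, then `P i = ⊥` is
associated and `J⁽ⁿ⁾ = ⊥`.
-/

section SymbolicPower

variable {R : Type*} [CommRing R]

theorem pow_le_symbolicPower (I : Ideal R) (n : ℕ) : I ^ n ≤ symbolicPower I n :=
  le_sInf fun _ ⟨_, _, _, hJ⟩ => hJ ▸ Ideal.le_comap_map

theorem symbolicPower_le_of_isPrimary {I q : Ideal R} {n : ℕ} (hq : q.IsPrimary)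
    (hass : q.radical ∈ associatedPrimes R (R ⧸ I)) (hle : I ^ n ≤ q) :
    symbolicPower I n ≤ q := by
  have := Ideal.isPrime_radical hq
  have hdisj : Disjoint (q.radical.primeCompl : Set R) q :=
    Set.disjoint_left.mpr fun _ hx hxq => hx (Ideal.le_radical hxq)
  calc symbolicPower I n
      ≤ (Ideal.map (algebraMap R (Localization q.radical.primeCompl)) (I ^ n)).comap _ :=
        sInf_le ⟨q.radical, this, hass, rfl⟩
    _ ≤ (Ideal.map (algebraMap R (Localization q.radical.primeCompl)) q).comap _ :=
        Ideal.comap_mono (Ideal.map_mono hle)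
    _ = q := IsLocalization.under_map_of_isPrimary_disjoint _ _ hq hdisj

theorem mem_associatedPrimes_of_le_colon {I p : Ideal R} (hp : p.IsPrime) (hIp : I ≤ p) {a : R}
    (ha : a ∉ p) (hpa : p ≤ I.colon {a}) : p ∈ associatedPrimes R (R ⧸ I) := by
  have hcolon : (⊥ : Submodule R (R ⧸ I)).colon {Ideal.Quotient.mk I a} = p := by
    ext g
    rw [Submodule.mem_colon_singleton, Submodule.mem_bot, Algebra.smul_def,
      Ideal.Quotient.algebraMap_eq, ← map_mul, Ideal.Quotient.eq_zero_iff_mem]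
    refine ⟨fun hg => (hp.mem_or_mem (hIp hg)).resolve_right ha, fun hg => ?_⟩
    simpa [Submodule.mem_colon_singleton] using hpa hg
  exact ⟨hp, _, by rw [hcolon, hp.radical]⟩

end SymbolicPower

namespace MvPolynomial

variable {σ R : Type*} [CommRing R]

theorem weight_indicator_one (S : Set σ) [DecidablePred (· ∈ S)] (m : σ →₀ ℕ) :
    Finsupp.weight (S.indicator 1) m = ∑ v ∈ m.support with v ∈ S, m v := by
  rw [Finsupp.weight_apply, Finsupp.sum, Finset.sum_filter]
  refine Finset.sum_congr rfl fun v _ => ?_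
  by_cases hv : v ∈ S <;> simp [hv]

theorem le_weight_of_le_weightedOrder {w : σ → ℕ} {f : MvPolynomial σ R} {n : ℕ}
    (hf : n ≤ (f : MvPowerSeries σ R).weightedOrder w) {m : σ →₀ ℕ} (hm : m ∈ f.support) :
    n ≤ Finsupp.weight w m := by
  rw [mem_support_iff, ← coeff_coe] at hm
  exact_mod_cast hf.trans (MvPowerSeries.weightedOrder_le _ hm)

theorem prod_X_pow_mem_pow_span_X_image {S : Set σ} {s : Finset σ} (hs : ∀ v ∈ s, v ∈ S)
    (e : σ → ℕ) :
    ∏ v ∈ s, (X v : MvPolynomial σ R) ^ e v ∈ Ideal.span (X '' S) ^ ∑ v ∈ s, e v := by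
  rw [← Finset.prod_pow_eq_pow_sum]
  exact Ideal.prod_mem_prod fun v hv =>
    Ideal.pow_mem_pow (Ideal.subset_span (Set.mem_image_of_mem X (hs v hv))) _

theorem prod_X_pow_filter_mem_pow_span_X_image (S : Set σ) [DecidablePred (· ∈ S)]
    {m : σ →₀ ℕ} {n : ℕ} (hm : n ≤ Finsupp.weight (S.indicator 1) m) :
    ∏ v ∈ m.support with v ∈ S, (X v : MvPolynomial σ R) ^ m v ∈ Ideal.span (X '' S) ^ n := by
  rw [weight_indicator_one] at hm
  exact Ideal.pow_le_pow_right hm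
    (prod_X_pow_mem_pow_span_X_image (fun v hv => (Finset.mem_filter.mp hv).2) m)

theorem monomial_mem_pow_span_X_image {S : Set σ} {m : σ →₀ ℕ} {n : ℕ}
    (hm : n ≤ Finsupp.weight (S.indicator 1) m) (c : R) :
    monomial m c ∈ Ideal.span (X '' S) ^ n := by
  classical
  rw [monomial_eq, Finsupp.prod, ← Finset.prod_filter_mul_prod_filter_not m.support (· ∈ S),
    ← mul_assoc, mul_comm (C c)]
  exact Ideal.mul_mem_right _ _
    (Ideal.mul_mem_right _ _ (prod_X_pow_filter_mem_pow_span_X_image S hm))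

theorem one_le_weightedOrder_of_mem_span_X_image {S : Set σ} {f : MvPolynomial σ R}
    (hf : f ∈ Ideal.span (X '' S)) :
    1 ≤ (f : MvPowerSeries σ R).weightedOrder (S.indicator 1) := by
  refine MvPowerSeries.nat_le_weightedOrder _ fun m hm => ?_
  rw [coeff_coe, ← notMem_support_iff]
  intro hmf
  obtain ⟨v, hv, hmv⟩ := mem_ideal_span_X_image.mp hf m hmf
  have : m v ≤ Finsupp.weight (S.indicator 1) m := by
    simpa [hv] using Finsupp.le_weight (S.indicator 1) (by simp [hv]) m
  omega

theorem mem_pow_span_X_image_iff {S : Set σ} {n : ℕ} {f : MvPolynomial σ R} :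
    f ∈ Ideal.span (X '' S) ^ n ↔
      (n : ℕ∞) ≤ (f : MvPowerSeries σ R).weightedOrder (S.indicator 1) := by
  constructor
  · intro hf
    induction n generalizing f with
    | zero => simp
    | succ n ih =>
      rw [pow_succ] at hf
      refine Submodule.mul_induction_on hf (fun p hp q hq => ?_) (fun p q hp hq => ?_)
      · rw [coe_mul, Nat.cast_succ]
        exact (add_le_add (ih hp) (one_le_weightedOrder_of_mem_span_X_image hq)).trans
          (MvPowerSeries.le_weightedOrder_mul _)
      · rw [coe_add]
        exact (le_min hp hq).trans (MvPowerSeries.min_weightedOrder_le_add _)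
  · intro hf
    rw [f.as_sum]
    exact Ideal.sum_mem _ fun m hm =>
      monomial_mem_pow_span_X_image (le_weight_of_le_weightedOrder hf hm) _

theorem weightedOrder_eq_zero_of_notMem_span_X_image {S : Set σ} {f : MvPolynomial σ R}
    (hf : f ∉ Ideal.span (X '' S)) :
    (f : MvPowerSeries σ R).weightedOrder (S.indicator 1) = 0 := by
  rw [← pow_one (Ideal.span _), mem_pow_span_X_image_iff, not_le, Nat.cast_one] at hf
  exact Order.lt_one_iff.mp hf

theorem iInf_pow_span_X_image_le_prod {ι : Type*} [Fintype ι] {S : ι → Set σ}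
    (hdisj : Pairwise fun i j => Disjoint (S i) (S j)) (hcover : ∀ v, ∃ i, v ∈ S i) (n : ι → ℕ) :
    ⨅ i, Ideal.span (X '' S i : Set (MvPolynomial σ R)) ^ n i ≤
      ∏ i, Ideal.span (X '' S i) ^ n i := by
  classical
  choose part hpart using hcover
  have hfiber : ∀ i v, v ∈ S i ↔ part v = i := fun i v =>
    ⟨fun hv => by_contra fun hne => Set.disjoint_left.mp (hdisj hne) (hpart v) hv,
      fun h => h ▸ hpart v⟩
  intro f hf
  rw [f.as_sum]
  refine Ideal.sum_mem _ fun m hm => ?_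
  rw [monomial_eq, Finsupp.prod, ← Finset.prod_fiberwise m.support part, mul_comm]
  refine Ideal.mul_mem_right _ _ (Ideal.prod_mem_prod fun i _ => ?_)
  have hmi : n i ≤ Finsupp.weight ((S i).indicator 1) m :=
    le_weight_of_le_weightedOrder (mem_pow_span_X_image_iff.mp (Ideal.mem_iInf.mp hf i)) hm
  simpa only [hfiber] using prod_X_pow_filter_mem_pow_span_X_image (S i) hmi

theorem X_mem_span_X_image_iff [Nontrivial R] {S : Set σ} {v : σ} :
    (X v : MvPolynomial σ R) ∈ Ideal.span (X '' S) ↔ v ∈ S := by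
  classical
  simp [mem_ideal_span_X_image, support_X, Finsupp.single_apply]

variable [IsDomain R]

theorem isPrime_span_X_image (S : Set σ) :
    (Ideal.span (X '' S : Set (MvPolynomial σ R))).IsPrime := by
  refine Ideal.isPrime_iff.mpr ⟨(Ideal.ne_top_iff_one _).mpr fun h1 => ?_, fun {f g} hfg => ?_⟩
  · simpa using one_le_weightedOrder_of_mem_span_X_image h1
  · by_contra! h
    have := one_le_weightedOrder_of_mem_span_X_image hfg
    rw [coe_mul, MvPowerSeries.weightedOrder_mul, weightedOrder_eq_zero_of_notMem_span_X_image h.1,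
      weightedOrder_eq_zero_of_notMem_span_X_image h.2] at this
    simp at this

theorem isPrimary_pow_span_X_image (S : Set σ) {n : ℕ} (hn : n ≠ 0) :
    (Ideal.span (X '' S : Set (MvPolynomial σ R)) ^ n).IsPrimary := by
  have hP := isPrime_span_X_image (R := R) S
  refine Ideal.isPrimary_iff.mpr ⟨fun htop => ?_, fun {f g} hfg => ?_⟩
  · exact hP.ne_top (top_le_iff.mp (htop ▸ Ideal.pow_le_self hn))
  · rw [Ideal.radical_pow _ hn, hP.radical, or_iff_not_imp_right]
    intro hg
    rw [mem_pow_span_X_image_iff, coe_mul, MvPowerSeries.weightedOrder_mul,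
      weightedOrder_eq_zero_of_notMem_span_X_image hg, add_zero] at hfg
    exact mem_pow_span_X_image_iff.mpr hfg

theorem symbolicPower_le_pow_span_X_image {I : Ideal (MvPolynomial σ R)} {S : Set σ} {n : ℕ}
    (hI : I ≤ Ideal.span (X '' S)) (hn : n ≠ 0)
    (hass : Ideal.span (X '' S) ∈ associatedPrimes (MvPolynomial σ R) (MvPolynomial σ R ⧸ I)) :
    symbolicPower I n ≤ Ideal.span (X '' S) ^ n :=
  symbolicPower_le_of_isPrimary (isPrimary_pow_span_X_image S hn)
    (by rwa [Ideal.radical_pow _ hn, (isPrime_span_X_image S).radical])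
    (Ideal.pow_right_mono hI n)

end MvPolynomial

section CompletePartiteHypergraph

theorem injective_of_forall_mem_parts {V ι : Type*} {Xp : ι → Finset V}
    (hdisj : Pairwise fun i j => Disjoint (Xp i) (Xp j))
    {f : ι → V} (hf : ∀ i, f i ∈ Xp i) : Function.Injective f :=
  fun i j hij => by_contra fun hne => Finset.disjoint_left.mp (hdisj hne) (hf i) (hij ▸ hf j)

variable {k V ι : Type*} [CommRing k] [DecidableEq V] {E : Finset (Finset V)}
  {Xp : ι → Finset V}

theorem edgeIdeal_le_span_X_image (hmeet : ∀ e ∈ E, ∀ i, (e ∩ Xp i).Nonempty) (i : ι) :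
    edgeIdeal k E ≤ Ideal.span (X '' ↑(Xp i)) := by
  refine Ideal.span_le.mpr ?_
  rintro _ ⟨e, he, rfl⟩
  obtain ⟨v, hv⟩ := hmeet e he i
  rw [Finset.mem_inter] at hv
  exact Ideal.mem_of_dvd _ (Finset.dvd_prod_of_mem _ hv.1)
    (Ideal.subset_span (Set.mem_image_of_mem X hv.2))

variable [Fintype ι]

theorem prod_X_mem_edgeIdeal (hdisj : Pairwise fun i j => Disjoint (Xp i) (Xp j))
    (hcomplete : ∀ f : ι → V, (∀ i, f i ∈ Xp i) → Finset.image f Finset.univ ∈ E)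
    {f : ι → V} (hf : ∀ i, f i ∈ Xp i) : ∏ i, (X (f i) : MvPolynomial V k) ∈ edgeIdeal k E := by
  rw [← Finset.prod_image (injective_of_forall_mem_parts hdisj hf).injOn]
  exact Ideal.subset_span ⟨_, hcomplete f hf, rfl⟩

theorem edgeIdeal_eq_prod_span_X_image (hdisj : Pairwise fun i j => Disjoint (Xp i) (Xp j))
    (hcover : ∀ v : V, ∃ i, v ∈ Xp i) (hmeet : ∀ e ∈ E, ∀ i, (e ∩ Xp i).Nonempty)
    (hcomplete : ∀ f : ι → V, (∀ i, f i ∈ Xp i) → Finset.image f Finset.univ ∈ E) :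
    edgeIdeal k E = ∏ i, Ideal.span (X '' ↑(Xp i)) := by
  apply le_antisymm
  · have := iInf_pow_span_X_image_le_prod (R := k) (S := fun i => (Xp i : Set V))
      (fun i j hij => Finset.disjoint_coe.mpr (hdisj hij)) hcover (fun _ => 1)
    simp only [pow_one] at this
    exact (le_iInf (edgeIdeal_le_span_X_image hmeet)).trans this
  · rw [Ideal.prod_span, Ideal.span_le]
    intro a ha
    obtain ⟨g, hg, rfl⟩ := (Set.mem_fintype_prod _ a).mp ha
    choose f hf hfg using hg
    simpa only [← hfg] using SetLike.mem_coe.mpr (prod_X_mem_edgeIdeal hdisj hcomplete hf)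

theorem span_X_image_mem_associatedPrimes [IsDomain k] [DecidableEq ι]
    (hdisj : Pairwise fun i j => Disjoint (Xp i) (Xp j))
    (hmeet : ∀ e ∈ E, ∀ i, (e ∩ Xp i).Nonempty)
    (hcomplete : ∀ f : ι → V, (∀ i, f i ∈ Xp i) → Finset.image f Finset.univ ∈ E)
    {c : ι → V} (hc : ∀ i, c i ∈ Xp i) (i : ι) :
    Ideal.span (X '' ↑(Xp i)) ∈
      associatedPrimes (MvPolynomial V k) (MvPolynomial V k ⧸ edgeIdeal k E) := by
  have hP := isPrime_span_X_image (R := k) (Xp i : Set V)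
  refine mem_associatedPrimes_of_le_colon hP (edgeIdeal_le_span_X_image hmeet i)
    (a := ∏ j ∈ Finset.univ.erase i, X (c j)) ?_ ?_
  · rw [hP.prod_mem_iff]
    rintro ⟨j, hj, hcj⟩
    exact Finset.disjoint_left.mp (hdisj (Finset.ne_of_mem_erase hj)) (hc j)
      (X_mem_span_X_image_iff.mp hcj)
  · refine Ideal.span_le.mpr ?_
    rintro _ ⟨w, hw, rfl⟩
    rw [SetLike.mem_coe, Submodule.mem_colon_singleton, smul_eq_mul]
    have hupdate : ∀ j, Function.update c i w j ∈ Xp j := fun j => by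
      rcases eq_or_ne j i with rfl | hj
      · simpa using hw
      · simpa [hj] using hc j
    convert prod_X_mem_edgeIdeal (k := k) hdisj hcomplete hupdate using 1
    rw [← Finset.mul_prod_erase _ _ (Finset.mem_univ i), Function.update_self]
    congr 1
    exact Finset.prod_congr rfl fun j hj => by
      rw [Function.update_of_ne (Finset.ne_of_mem_erase hj)]

end CompletePartiteHypergraph

theorem stmt4_general {k V : Type*} [Field k] [DecidableEq V]
    (r : ℕ) (E : Finset (Finset V))
    (Xp : Fin r → Finset V)
    (hdisj : Pairwise fun i j => Disjoint (Xp i) (Xp j))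
    (hcover : ∀ v : V, ∃ i, v ∈ Xp i)
    (hpartite : ∀ e ∈ E, ∀ i, (e ∩ Xp i).card = 1)
    (hcomplete : ∀ f : Fin r → V, (∀ i, f i ∈ Xp i) → Finset.image f Finset.univ ∈ E) :
    ∀ n : ℕ, 1 ≤ n → symbolicPower (edgeIdeal k E) n = (edgeIdeal k E) ^ n := by
  intro n hn
  set P : Fin r → Ideal (MvPolynomial V k) := fun i => Ideal.span (X '' ↑(Xp i)) with hP
  have hmeet : ∀ e ∈ E, ∀ i, (e ∩ Xp i).Nonempty := fun e he i =>
    Finset.card_pos.mp (by rw [hpartite e he i]; exact Nat.one_pos)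
  have hsymb : ∀ i, P i ∈ associatedPrimes _ (MvPolynomial V k ⧸ edgeIdeal k E) →
      symbolicPower (edgeIdeal k E) n ≤ P i ^ n := fun i =>
    symbolicPower_le_pow_span_X_image (edgeIdeal_le_span_X_image hmeet i) (by omega)
  refine le_antisymm ?_ (pow_le_symbolicPower _ n)
  by_cases hne : ∀ i, (Xp i).Nonempty
  · choose c hc using hne
    calc symbolicPower (edgeIdeal k E) n
        ≤ ⨅ i, P i ^ n :=
          le_iInf fun i => hsymb i (span_X_image_mem_associatedPrimes hdisj hmeet hcomplete hc i)
      _ ≤ ∏ i, P i ^ n := iInf_pow_span_X_image_le_prod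
          (fun i j hij => Finset.disjoint_coe.mpr (hdisj hij)) hcover _
      _ = edgeIdeal k E ^ n := by
          rw [edgeIdeal_eq_prod_span_X_image hdisj hcover hmeet hcomplete, Finset.prod_pow]
  · obtain ⟨i, hi⟩ := not_forall.mp hne
    have hPi : P i = ⊥ := by simp [hP, Finset.not_nonempty_iff_eq_empty.mp hi]
    have hass : P i ∈ associatedPrimes _ (MvPolynomial V k ⧸ edgeIdeal k E) :=
      mem_associatedPrimes_of_le_colon (isPrime_span_X_image _) (edgeIdeal_le_span_X_image hmeet i)
        (a := 1) (isPrime_span_X_image _).one_notMem (by rw [hPi]; exact bot_le)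
    calc symbolicPower (edgeIdeal k E) n ≤ P i ^ n := hsymb i hass
      _ = ⊥ := by rw [hPi, Ideal.bot_pow (by omega)]
      _ ≤ edgeIdeal k E ^ n := bot_le

/-- for a complete r-uniform r-partite hypergraph, all symbolic powers
of the edge ideal agree with ordinary powers. -/
theorem stmt4 {k V : Type*} [Field k] [Fintype V] [DecidableEq V]
    (r : ℕ) (hr : 1 ≤ r) (E : Finset (Finset V))
    (huniform : ∀ e ∈ E, e.card = r)
    (Xp : Fin r → Finset V)
    (hdisj : Pairwise fun i j => Disjoint (Xp i) (Xp j))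
    (hcover : ∀ v : V, ∃ i, v ∈ Xp i)
    (hpartite : ∀ e ∈ E, ∀ i, (e ∩ Xp i).card = 1)
    (hcomplete : ∀ f : Fin r → V, (∀ i, f i ∈ Xp i) → Finset.image f Finset.univ ∈ E) :
    ∀ n : ℕ, 1 ≤ n → symbolicPower (edgeIdeal k E) n = (edgeIdeal k E) ^ n :=
  stmt4_general r E Xp hdisj hcover hpartite hcomplete
end

section
/- Let C_n be the cycle on n vertices, 2 ≤ t ≤ n, and write n = tq + r with 0 ≤ r ≤ t−1. Then the Waldschmidt constant of the t-path ideal I = I_t(C_n) is t if r = 0, and n/(q+1) if r ≠ 0. -/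
/-!
For a hypergraph with edge set `E`, a minimal vertex cover `C` has a private edge at each of its
vertices; from this one reads off that the associated primes of `R ⧸ I(E)` are exactly the
monomial primes `P_C = (x_v : v ∈ C)` of the minimal covers, and that `P_C ^ m` is `P_C`-primary.
Hence `I(E)^(m) = ⋂_C P_C ^ m`: a polynomial lies in it iff each of its monomials has degree at
least `m` in the variables of every minimal cover.

For the `t`-path hypergraph of `Cₙ` let `M = ⌈n / t⌉`. Every vertex cover has at least `M`
vertices, and the `n` rotations of `{0, t, …, (M - 1) t}` are minimal covers containing each
vertex exactly `M` times. Summing the `m` lower bounds over these rotations gives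
`n m ≤ M · α(I^(m))`, while `(x₀ ⋯ xₙ₋₁) ^ (⌊m / M⌋ + 1) ∈ I^(m)` gives
`α(I^(m)) ≤ n (m / M + 1)`. So `α(I^(m)) / m → n / M`.
-/

open MvPolynomial

/-- the hyperedges of the t-path hypergraph of the cycle Cₙ: all sets of t
cyclically consecutive vertices. -/
def pathHyperedges (n t : ℕ) [NeZero n] : Finset (Finset (ZMod n)) :=
  Finset.image
    (fun i : ZMod n => Finset.image (fun j : Fin t => i + ((j : ℕ) : ZMod n)) Finset.univ)
    Finset.univ

/-- least degree of a nonzero element of an ideal of polynomials -/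
noncomputable def alphaIdeal {k V : Type*} [CommRing k] (J : Ideal (MvPolynomial V k)) : ℕ :=
  sInf { d : ℕ | ∃ f ∈ J, f ≠ 0 ∧ f.totalDegree = d }

theorem mem_symbolicPower_iff {R : Type*} [CommRing R] {I : Ideal R} {m : ℕ} {f : R} :
    f ∈ symbolicPower I m ↔ ∀ p ∈ associatedPrimes R (R ⧸ I), ∃ s ∉ p, s * f ∈ I ^ m := by
  simp only [symbolicPower, Submodule.mem_sInf, Set.mem_ofPred_eq]
  constructor
  · intro h p hp
    have hprime := hp.isPrime
    simpa only [Ideal.mem_comap, IsLocalization.algebraMap_mem_map_algebraMap_iff p.primeCompl,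
      Ideal.mem_primeCompl_iff] using h _ ⟨p, hprime, hp, rfl⟩
  · rintro h _ ⟨p, hprime, hp, rfl⟩
    rw [Ideal.mem_comap, IsLocalization.algebraMap_mem_map_algebraMap_iff p.primeCompl]
    simpa only [Ideal.mem_primeCompl_iff] using h p hp

theorem Ideal.Quotient.mem_colon_bot_singleton_mk {R : Type*} [CommRing R] {I : Ideal R}
    {r f : R} : r ∈ (⊥ : Submodule R (R ⧸ I)).colon {Ideal.Quotient.mk I f} ↔ r * f ∈ I := by
  rw [Submodule.mem_colon_singleton, Submodule.mem_bot, Algebra.smul_def,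
    Ideal.Quotient.algebraMap_eq, ← map_mul, Ideal.Quotient.eq_zero_iff_mem]

namespace MvPolynomial

variable {σ R : Type*} [CommRing R]

def degreeIn (s : Finset σ) (d : σ →₀ ℕ) : ℕ := ∑ v ∈ s, d v

variable (R) in
noncomputable def varsIdeal (s : Finset σ) : Ideal (MvPolynomial σ R) :=
  Ideal.span ((X : σ → MvPolynomial σ R) '' s)

theorem mem_varsIdeal_iff {s : Finset σ} {f : MvPolynomial σ R} :
    f ∈ varsIdeal R s ↔ ∀ d ∈ f.support, ∃ v ∈ s, d v ≠ 0 :=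
  mem_ideal_span_X_image

theorem X_mem_varsIdeal_iff [Nontrivial R] {s : Finset σ} {v : σ} :
    (X v : MvPolynomial σ R) ∈ varsIdeal R s ↔ v ∈ s := by
  simp [mem_varsIdeal_iff, support_X, Finsupp.single_apply_eq_zero]

theorem monomial_mem_varsIdeal_pow {s : Finset σ} {d : σ →₀ ℕ} {m : ℕ} (c : R)
    (h : m ≤ degreeIn s d) : monomial d c ∈ varsIdeal R s ^ m := by
  classical
  have hprod : ∏ v ∈ s, X v ^ d v ∈ varsIdeal R s ^ degreeIn s d := by
    rw [degreeIn, ← Finset.prod_pow_eq_pow_sum]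
    exact Ideal.prod_mem_prod fun v hv =>
      Ideal.pow_mem_pow (show X v ∈ varsIdeal R s from Ideal.subset_span ⟨v, hv, rfl⟩) _
  refine Ideal.pow_le_pow_right h (Ideal.mem_of_dvd _ ?_ hprod)
  rw [prod_X_pow, monomial_dvd_monomial]
  refine ⟨Or.inr fun v => ?_, one_dvd c⟩
  rw [Finsupp.indicator_apply]
  split_ifs <;> simp

variable [DecidableEq σ]

/-- The substitution `x_v ↦ T x_v` for `v ∈ s`. It turns the `s`-degree of a monomial into its
`T`-adic order, so that membership in `varsIdeal R s ^ m` becomes divisibility by `T ^ m`, and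
primality of `T` yields primality of `varsIdeal R s` and primariness of its powers. -/
noncomputable def markVars (s : Finset σ) : MvPolynomial σ R →+* Polynomial (MvPolynomial σ R) :=
  eval₂Hom (Polynomial.C.comp C) fun v =>
    Polynomial.C (X v) * Polynomial.X ^ if v ∈ s then 1 else 0

theorem markVars_monomial (s : Finset σ) (d : σ →₀ ℕ) (c : R) :
    markVars s (monomial d c) = Polynomial.C (monomial d c) * Polynomial.X ^ degreeIn s d := by
  have hdeg : ∑ v ∈ d.support, (if v ∈ s then 1 else 0) * d v = degreeIn s d := by
    simp_rw [ite_mul, one_mul, zero_mul, Finset.sum_ite_mem]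
    refine Finset.sum_subset Finset.inter_subset_right fun v hvs hv => ?_
    simpa [hvs] using hv
  rw [markVars, eval₂Hom_monomial, Finsupp.prod, monomial_eq, Finsupp.prod]
  simp_rw [mul_pow, Finset.prod_mul_distrib, ← pow_mul, Finset.prod_pow_eq_pow_sum, ← map_pow,
    ← map_prod, hdeg, map_mul, RingHom.comp_apply, mul_assoc]

theorem markVars_eq_sum (s : Finset σ) (f : MvPolynomial σ R) :
    markVars s f =
      ∑ d ∈ f.support, Polynomial.C (monomial d (coeff d f)) * Polynomial.X ^ degreeIn s d := by
  conv_lhs => rw [f.as_sum]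
  simp_rw [map_sum, markVars_monomial]

theorem coeff_coeff_markVars (s : Finset σ) (f : MvPolynomial σ R) (i : ℕ) (d : σ →₀ ℕ) :
    coeff d ((markVars s f).coeff i) = if degreeIn s d = i then coeff d f else 0 := by
  classical
  simp only [markVars_eq_sum, Polynomial.finsetSum_coeff, Polynomial.coeff_C_mul_X_pow, coeff_sum,
    apply_ite (coeff d), coeff_monomial, coeff_zero]
  rw [Finset.sum_eq_single d]
  · simp [eq_comm]
  · intro e _ he
    simp [he]
  · intro hd
    simp [notMem_support_iff.1 hd]

theorem X_pow_dvd_markVars_iff {s : Finset σ} {f : MvPolynomial σ R} {j : ℕ} :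
    Polynomial.X ^ j ∣ markVars s f ↔ ∀ d ∈ f.support, j ≤ degreeIn s d := by
  rw [Polynomial.X_pow_dvd_iff]
  constructor
  · intro h d hd
    by_contra! hlt
    have := coeff_coeff_markVars s f (degreeIn s d) d
    rw [h _ hlt, if_pos rfl, coeff_zero, eq_comm] at this
    exact mem_support_iff.1 hd this
  · intro h i hi
    ext d
    rw [coeff_coeff_markVars, coeff_zero]
    split_ifs with hd
    · exact notMem_support_iff.1 fun hmem => (h d hmem).not_gt (hd ▸ hi)
    · rfl

theorem X_pow_dvd_markVars_of_mem {s : Finset σ} {f : MvPolynomial σ R} {m : ℕ}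
    (hf : f ∈ varsIdeal R s ^ m) : Polynomial.X ^ m ∣ markVars s f := by
  have hmap : (varsIdeal R s).map (markVars s) ≤
      Ideal.span {(Polynomial.X : Polynomial (MvPolynomial σ R))} := by
    rw [varsIdeal, Ideal.map_span, Ideal.span_le]
    rintro _ ⟨_, ⟨v, hv, rfl⟩, rfl⟩
    simp [markVars, Finset.mem_coe.1 hv, Ideal.mem_span_singleton]
  rw [← Ideal.mem_span_singleton, ← Ideal.span_singleton_pow]
  have := Ideal.mem_map_of_mem (markVars s) hf
  rw [Ideal.map_pow] at this
  exact Ideal.pow_right_mono hmap m this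

theorem mem_varsIdeal_pow_iff {s : Finset σ} {f : MvPolynomial σ R} {m : ℕ} :
    f ∈ varsIdeal R s ^ m ↔ ∀ d ∈ f.support, m ≤ degreeIn s d := by
  refine ⟨fun hf => X_pow_dvd_markVars_iff.1 (X_pow_dvd_markVars_of_mem hf), fun h => ?_⟩
  rw [f.as_sum]
  exact Ideal.sum_mem _ fun d hd => monomial_mem_varsIdeal_pow _ (h d hd)

theorem mem_varsIdeal_pow_iff_X_pow_dvd {s : Finset σ} {f : MvPolynomial σ R} {m : ℕ} :
    f ∈ varsIdeal R s ^ m ↔ Polynomial.X ^ m ∣ markVars s f := by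
  rw [mem_varsIdeal_pow_iff, X_pow_dvd_markVars_iff]

theorem mem_varsIdeal_iff_X_dvd {s : Finset σ} {f : MvPolynomial σ R} :
    f ∈ varsIdeal R s ↔ Polynomial.X ∣ markVars s f := by
  simpa using mem_varsIdeal_pow_iff_X_pow_dvd (m := 1)

variable [IsDomain R]

theorem varsIdeal_isPrime (s : Finset σ) : (varsIdeal R s).IsPrime := by
  refine Ideal.isPrime_iff.2 ⟨fun htop => ?_, fun {f g} hfg => ?_⟩
  · have hX := mem_varsIdeal_iff_X_dvd.1 (htop ▸ Submodule.mem_top : (1 : MvPolynomial σ R) ∈ _)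
    rw [map_one] at hX
    exact Polynomial.prime_X.not_isUnit (isUnit_of_dvd_one hX)
  · simp_rw [mem_varsIdeal_iff_X_dvd, map_mul] at hfg ⊢
    exact Polynomial.prime_X.dvd_or_dvd hfg

theorem mem_varsIdeal_pow_of_mul_mem {s : Finset σ} {a f : MvPolynomial σ R} {m : ℕ}
    (ha : a ∉ varsIdeal R s) (h : a * f ∈ varsIdeal R s ^ m) : f ∈ varsIdeal R s ^ m := by
  rw [mem_varsIdeal_iff_X_dvd] at ha
  rw [mem_varsIdeal_pow_iff_X_pow_dvd, map_mul] at h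
  rw [mem_varsIdeal_pow_iff_X_pow_dvd]
  exact Polynomial.prime_X.pow_dvd_of_dvd_mul_left m ha h

end MvPolynomial

section EdgeIdeal

variable {V R : Type*} [CommRing R]

theorem prod_X_eq_monomial_indicator (e : Finset V) :
    ∏ v ∈ e, (X v : MvPolynomial V R) = monomial (Finsupp.indicator e fun _ _ => 1) 1 := by
  simpa using prod_X_pow (R := R) 1 e

variable [DecidableEq V] {E : Finset (Finset V)} {C : Finset V}

def IsVertexCover (E : Finset (Finset V)) (C : Finset V) : Prop := ∀ e ∈ E, ∃ v ∈ C, v ∈ e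

theorem minimal_isVertexCover_iff :
    Minimal (IsVertexCover E) C ↔
      IsVertexCover E C ∧ ∀ v ∈ C, ∃ e ∈ E, v ∈ e ∧ ∀ u ∈ e, u ∈ C → u = v := by
  refine ⟨fun hC => ⟨hC.prop, fun v hv => ?_⟩, fun ⟨hC, hpriv⟩ => ⟨hC, fun D hD hDC v hv => ?_⟩⟩
  · have hnot : ¬ IsVertexCover E (C.erase v) := fun h =>
      Finset.notMem_erase v C (hC.2 h (Finset.erase_subset v C) hv)
    simp only [IsVertexCover, not_forall, not_exists, not_and] at hnot
    obtain ⟨e, he, hmiss⟩ := hnot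
    obtain ⟨u, hu, hue⟩ := hC.prop e he
    refine ⟨e, he, ?_, fun w hwe hwC =>
      by_contra fun hwv => hmiss w (Finset.mem_erase.2 ⟨hwv, hwC⟩) hwe⟩
    by_contra hve
    exact hmiss u (Finset.mem_erase.2 ⟨fun huv => hve (huv ▸ hue), hu⟩) hue
  · obtain ⟨e, he, hve, honly⟩ := hpriv v hv
    obtain ⟨u, huD, hue⟩ := hD e he
    exact honly u hue (hDC huD) ▸ huD

theorem mem_edgeIdeal_iff {f : MvPolynomial V R} :
    f ∈ edgeIdeal R E ↔ ∀ d ∈ f.support, ∃ e ∈ E, e ⊆ d.support := by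
  have hgen : (fun e : Finset V => ∏ v ∈ e, (X v : MvPolynomial V R)) '' E =
      (fun d => monomial d (1 : R)) ''
        ((fun e : Finset V => Finsupp.indicator e fun _ _ => 1) '' E) := by
    rw [Set.image_image]
    exact Set.image_congr fun e _ => prod_X_eq_monomial_indicator e
  rw [edgeIdeal, hgen, mem_ideal_span_monomial_image]
  refine forall₂_congr fun d _ => ?_
  simp only [Set.mem_image, Finset.mem_coe, exists_exists_and_eq_and]
  refine exists_congr fun e => and_congr_right fun _ => ?_
  simp only [Finsupp.le_def, Finsupp.indicator_apply, Finset.subset_iff, Finsupp.mem_support_iff]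
  refine ⟨fun h v hv => ?_, fun h v => ?_⟩
  · simpa [hv, Nat.one_le_iff_ne_zero] using h v
  · split_ifs with hv
    · exact Nat.one_le_iff_ne_zero.2 (h hv)
    · exact Nat.zero_le _

theorem edgeIdeal_le_varsIdeal (hC : IsVertexCover E C) : edgeIdeal R E ≤ varsIdeal R C := by
  rw [edgeIdeal, Ideal.span_le]
  rintro _ ⟨e, he, rfl⟩
  obtain ⟨v, hvC, hve⟩ := hC e he
  exact Ideal.mem_of_dvd _ (Finset.dvd_prod_of_mem _ hve) (Ideal.subset_span ⟨v, hvC, rfl⟩)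

theorem mem_edgeIdeal_of_forall_minimal [Fintype V] {f : MvPolynomial V R}
    (h : ∀ C, Minimal (IsVertexCover E) C → f ∈ varsIdeal R C) : f ∈ edgeIdeal R E := by
  refine mem_edgeIdeal_iff.2 fun d hd => ?_
  by_contra! hno
  have hcov : IsVertexCover E d.supportᶜ := fun e he => by
    obtain ⟨v, hve, hv⟩ := Finset.not_subset.1 (hno e he)
    exact ⟨v, Finset.mem_compl.2 hv, hve⟩
  obtain ⟨C, hCsub, hCmin⟩ := exists_minimal_le_of_wellFoundedLT _ _ hcov
  obtain ⟨v, hvC, hdv⟩ := mem_varsIdeal_iff.1 (h C hCmin) d hd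
  exact Finset.mem_compl.1 (hCsub hvC) (Finsupp.mem_support_iff.2 hdv)

variable [IsDomain R]

theorem isAssociatedPrime_varsIdeal [Fintype V] (hC : Minimal (IsVertexCover E) C) :
    IsAssociatedPrime (varsIdeal R C) (MvPolynomial V R ⧸ edgeIdeal R E) := by
  have hprime := varsIdeal_isPrime (R := R) C
  set g : MvPolynomial V R := ∏ u ∈ Cᶜ, X u
  have hg : g ∉ varsIdeal R C := by
    rw [Ideal.IsPrime.prod_mem_iff]
    rintro ⟨u, hu, hXu⟩
    exact Finset.mem_compl.1 hu (X_mem_varsIdeal_iff.1 hXu)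
  have hcolon : (⊥ : Submodule _ (MvPolynomial V R ⧸ edgeIdeal R E)).colon
      {Ideal.Quotient.mk _ g} = varsIdeal R C := by
    ext r
    rw [Ideal.Quotient.mem_colon_bot_singleton_mk]
    refine ⟨fun hr => ?_, fun hr => ?_⟩
    · exact (hprime.mem_or_mem (edgeIdeal_le_varsIdeal hC.prop hr)).resolve_right hg
    · have hle : varsIdeal R C ≤ (edgeIdeal R E).colon (Ideal.span {g}) := by
        rw [varsIdeal, Ideal.span_le]
        rintro _ ⟨v, hv, rfl⟩
        rw [SetLike.mem_coe, Ideal.mem_colon_span_singleton]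
        obtain ⟨e, he, hve, honly⟩ := (minimal_isVertexCover_iff.1 hC).2 v hv
        have hsub : e ⊆ insert v Cᶜ := fun u hu => by
          by_cases huC : u ∈ C
          · exact Finset.mem_insert.2 (Or.inl (honly u hu huC))
          · exact Finset.mem_insert_of_mem (Finset.mem_compl.2 huC)
        have hprod : X v * g = ∏ u ∈ insert v Cᶜ, X u :=
          (Finset.prod_insert (by simpa using Finset.mem_coe.1 hv)).symm
        rw [hprod]
        exact Ideal.mem_of_dvd _ (Finset.prod_dvd_prod_of_subset _ _ _ hsub)
          (Ideal.subset_span ⟨e, he, rfl⟩)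
      exact Ideal.mem_colon_span_singleton.1 (hle hr)
  exact ⟨hprime, Ideal.Quotient.mk _ g, by rw [hcolon, hprime.radical]⟩

theorem exists_minimal_eq_varsIdeal_of_mem_associatedPrimes [Fintype V]
    {p : Ideal (MvPolynomial V R)}
    (hp : p ∈ associatedPrimes (MvPolynomial V R) (MvPolynomial V R ⧸ edgeIdeal R E)) :
    ∃ C, Minimal (IsVertexCover E) C ∧ p = varsIdeal R C := by
  classical
  obtain ⟨hprime, x, hx⟩ := hp
  obtain ⟨f, rfl⟩ := Ideal.Quotient.mk_surjective x
  have hmem : ∀ r, r ∈ p ↔ ∃ N : ℕ, r ^ N * f ∈ edgeIdeal R E := fun r => by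
    simp_rw [hx, Ideal.mem_radical_iff, Ideal.Quotient.mem_colon_bot_singleton_mk]
  set MC := Finset.univ.filter fun C => Minimal (IsVertexCover E) C ∧ f ∉ varsIdeal R C
  have hprod : ∏ C ∈ MC, varsIdeal R C ≤ p := fun y hy => (hmem y).2 ⟨1, by
    rw [pow_one]
    refine mem_edgeIdeal_of_forall_minimal fun C hC => ?_
    by_cases hf : f ∈ varsIdeal R C
    · exact Ideal.mul_mem_left _ _ hf
    · refine Ideal.mul_mem_right _ _ (Ideal.prod_le_inf.trans (Finset.inf_le ?_) hy)
      simpa [MC] using ⟨hC, hf⟩⟩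
  obtain ⟨C, hCMC, hle⟩ := hprime.prod_le.1 hprod
  obtain ⟨hC, hf⟩ : Minimal (IsVertexCover E) C ∧ f ∉ varsIdeal R C := by simpa [MC] using hCMC
  refine ⟨C, hC, le_antisymm (fun r hr => ?_) hle⟩
  obtain ⟨N, hN⟩ := (hmem r).1 hr
  have hP := varsIdeal_isPrime (R := R) C
  exact hP.mem_of_pow_mem N
    ((hP.mem_or_mem (edgeIdeal_le_varsIdeal hC.prop hN)).resolve_right hf)

theorem exists_notMem_varsIdeal_span_mul_le (hC : Minimal (IsVertexCover E) C) :
    ∃ s ∉ varsIdeal R C, Ideal.span {s} * varsIdeal R C ≤ edgeIdeal R E := by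
  choose! e he hve honly using (minimal_isVertexCover_iff.1 hC).2
  have hP := varsIdeal_isPrime (R := R) C
  refine ⟨∏ v ∈ C, ∏ u ∈ (e v).erase v, X u, fun hs => ?_, ?_⟩
  · obtain ⟨v, hv, hs⟩ := hP.prod_mem_iff.1 hs
    obtain ⟨u, hu, hXu⟩ := hP.prod_mem_iff.1 hs
    obtain ⟨huv, hue⟩ := Finset.mem_erase.1 hu
    exact huv (honly v hv u hue (X_mem_varsIdeal_iff.1 hXu))
  · rw [varsIdeal, Ideal.span_mul_span', Ideal.span_le, Set.singleton_mul]
    rintro _ ⟨_, ⟨v, hv, rfl⟩, rfl⟩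
    have hedge : ∏ u ∈ e v, (X u : MvPolynomial V R) ∣
        (∏ w ∈ C, ∏ u ∈ (e w).erase w, X u) * X v := by
      rw [← Finset.mul_prod_erase C _ hv, mul_right_comm, Finset.prod_erase_mul _ _ (hve v hv)]
      exact dvd_mul_right _ _
    exact Ideal.mem_of_dvd _ hedge (Ideal.subset_span ⟨e v, he v hv, rfl⟩)

theorem mem_symbolicPower_edgeIdeal_iff [Fintype V] {m : ℕ} {f : MvPolynomial V R} :
    f ∈ symbolicPower (edgeIdeal R E) m ↔
      ∀ C, Minimal (IsVertexCover E) C → f ∈ varsIdeal R C ^ m := by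
  rw [mem_symbolicPower_iff]
  refine ⟨fun h C hC => ?_, fun h p hp => ?_⟩
  · obtain ⟨s, hs, hsf⟩ := h _ (isAssociatedPrime_varsIdeal hC)
    exact mem_varsIdeal_pow_of_mul_mem hs
      (Ideal.pow_right_mono (edgeIdeal_le_varsIdeal hC.prop) m hsf)
  · obtain ⟨C, hC, rfl⟩ := exists_minimal_eq_varsIdeal_of_mem_associatedPrimes hp
    obtain ⟨s, hs, hsle⟩ := exists_notMem_varsIdeal_span_mul_le (R := R) hC
    refine ⟨s ^ m, fun hsm => hs ((varsIdeal_isPrime C).mem_of_pow_mem m hsm), ?_⟩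
    refine Ideal.pow_right_mono hsle m ?_
    rw [mul_pow]
    exact Ideal.mul_mem_mul (Ideal.pow_mem_pow (Ideal.mem_span_singleton_self s) m) (h C hC)

end EdgeIdeal

section Counting

open Finset

theorem sum_sum_eq_mul_sum_of_card_filter_mem {ι α : Type*} [Fintype ι] [Fintype α]
    [DecidableEq α] {F : ι → Finset α} {K : ℕ} (hF : ∀ v, #{i | v ∈ F i} = K) (f : α → ℕ) :
    ∑ i, ∑ v ∈ F i, f v = K * ∑ v, f v := by
  rw [Finset.sum_comm' (t' := univ) (s' := fun v => {i | v ∈ F i}) (by simp), mul_sum]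
  simp [hF]

theorem card_filter_mem_image_add {G : Type*} [AddCommGroup G] [Fintype G] [DecidableEq G]
    {K : ℕ} {c : Fin K → G} (hc : Function.Injective c) (v : G) :
    #{i | v ∈ univ.image fun j => i + c j} = K := by
  have : ({i | v ∈ univ.image fun j => i + c j} : Finset G) = univ.image fun j => v - c j := by
    ext i
    simp [eq_sub_iff_add_eq, eq_comm]
  rw [this, card_image_of_injective _ fun j j' h => hc (sub_right_injective h), card_univ,
    Fintype.card_fin]

theorem eq_of_mul_le_mul_add_pred {j j' t : ℕ} (ht : 0 < t) (h₁ : j * t ≤ j' * t + (t - 1))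
    (h₂ : j' * t ≤ j * t + (t - 1)) : j = j' := by
  have h₁' : j * t < (j' + 1) * t := by rw [add_one_mul]; omega
  have h₂' : j' * t < (j + 1) * t := by rw [add_one_mul]; omega
  have hj := Nat.lt_of_mul_lt_mul_right h₁'
  have hj' := Nat.lt_of_mul_lt_mul_right h₂'
  omega

theorem mul_lt_of_lt_of_mul_lt_add {j M t n : ℕ} (hj : j < M) (htM : M * t < n + t) :
    j * t < n := by
  have : (j + 1) * t ≤ M * t := Nat.mul_le_mul_right t hj
  rw [add_one_mul] at this
  omega

end Counting

section Cycle

open Finset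

variable {n t M : ℕ}

def window (n t : ℕ) (a : ZMod n) : Finset (ZMod n) :=
  univ.image fun l : Fin t => a + ((l : ℕ) : ZMod n)

def progression (n t M : ℕ) (i : ZMod n) : Finset (ZMod n) :=
  univ.image fun j : Fin M => i + ((j * t : ℕ) : ZMod n)

theorem mem_window {a u : ZMod n} : u ∈ window n t a ↔ ∃ l < t, a + (l : ZMod n) = u := by
  simp [window, Fin.exists_iff]

theorem mem_progression {i u : ZMod n} :
    u ∈ progression n t M i ↔ ∃ j < M, i + ((j * t : ℕ) : ZMod n) = u := by
  simp [progression, Fin.exists_iff]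

theorem ZMod.natCast_inj_of_lt {x y : ℕ} (hx : x < n) (hy : y < n) (h : (x : ZMod n) = y) :
    x = y := by
  rwa [ZMod.natCast_eq_natCast_iff', Nat.mod_eq_of_lt hx, Nat.mod_eq_of_lt hy] at h

variable [NeZero n]

theorem pos_and_pos_of_le_mul (hMt : n ≤ M * t) : 0 < M ∧ 0 < t :=
  CanonicallyOrderedAdd.mul_pos.1 ((Nat.pos_of_neZero n).trans_le hMt)

theorem isVertexCover_pathHyperedges_iff {C : Finset (ZMod n)} :
    IsVertexCover (pathHyperedges n t) C ↔ ∀ a, ∃ v ∈ C, v ∈ window n t a := by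
  simp [IsVertexCover, pathHyperedges, window]

theorem le_mul_card_of_isVertexCover (htn : t ≤ n) {C : Finset (ZMod n)}
    (hC : IsVertexCover (pathHyperedges n t) C) : n ≤ t * #C := by
  have hinj : Function.Injective fun l : Fin t => ((l : ℕ) : ZMod n) := fun l l' h =>
    Fin.ext (ZMod.natCast_inj_of_lt (l.2.trans_le htn) (l'.2.trans_le htn) h)
  calc n = ∑ _a : ZMod n, 1 := by simp
    _ ≤ ∑ a, ∑ v ∈ window n t a, if v ∈ C then 1 else 0 := by
      refine sum_le_sum fun a _ => ?_
      obtain ⟨v, hvC, hva⟩ := isVertexCover_pathHyperedges_iff.1 hC a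
      exact (if_pos hvC).symm.le.trans
        (single_le_sum (f := fun v => if v ∈ C then 1 else 0) (fun _ _ => Nat.zero_le _) hva)
    _ = t * ∑ v, if v ∈ C then 1 else 0 :=
      sum_sum_eq_mul_sum_of_card_filter_mem (card_filter_mem_image_add hinj) _
    _ = t * #C := by simp

theorem isVertexCover_progression (hMt : n ≤ M * t) (i : ZMod n) :
    IsVertexCover (pathHyperedges n t) (progression n t M i) := by
  obtain ⟨hM, ht⟩ := pos_and_pos_of_le_mul hMt
  refine isVertexCover_pathHyperedges_iff.2 fun a => ?_
  set b := (a - i).val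
  have hb : b < n := ZMod.val_lt _
  -- the first point of the progression at or after `b`, wrapping around to `0` past the last one
  obtain ⟨j, hj, l, hl, hjl⟩ : ∃ j < M, ∃ l < t, j * t = b + l ∨ j = 0 ∧ b + l = n := by
    have hdiv := Nat.div_mul_le_self (b + t - 1) t
    have hlt := Nat.lt_div_mul_add (a := b + t - 1) ht
    by_cases hc : (b + t - 1) / t < M
    · exact ⟨_, hc, (b + t - 1) / t * t - b, by omega, Or.inl (by omega)⟩
    · have := Nat.mul_le_mul_right t (not_lt.1 hc)
      exact ⟨0, by omega, n - b, by omega, Or.inr ⟨rfl, by omega⟩⟩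
  refine ⟨i + ((j * t : ℕ) : ZMod n), mem_progression.2 ⟨j, hj, rfl⟩, mem_window.2 ⟨l, hl, ?_⟩⟩
  have hcast : ((j * t : ℕ) : ZMod n) = ((b + l : ℕ) : ZMod n) := by
    rcases hjl with h | ⟨rfl, h⟩
    · rw [h]
    · simp [h]
  rw [hcast, Nat.cast_add, ZMod.natCast_zmod_val]
  ring

theorem minimal_isVertexCover_progression (htn : t ≤ n) (hMt : n ≤ M * t) (htM : M * t < n + t)
    (i : ZMod n) : Minimal (IsVertexCover (pathHyperedges n t)) (progression n t M i) := by
  have ht := (pos_and_pos_of_le_mul hMt).2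
  refine minimal_isVertexCover_iff.2 ⟨isVertexCover_progression hMt i, ?_⟩
  rintro _ hv
  obtain ⟨j, hj, rfl⟩ := mem_progression.1 hv
  have hjt := mul_lt_of_lt_of_mul_lt_add hj htM
  -- the window ending at the `j`-th point; for `j = 0` truncated subtraction makes it start there
  set a := j * t - (t - 1)
  refine ⟨window n t (i + (a : ZMod n)), by simp [pathHyperedges, window], ?_,
    fun u hu hu' => ?_⟩
  · refine mem_window.2 ⟨j * t - a, by omega, ?_⟩
    rw [add_assoc, ← Nat.cast_add, Nat.add_sub_cancel' (Nat.sub_le _ _)]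
  · obtain ⟨l, hl, rfl⟩ := mem_window.1 hu
    obtain ⟨j', hj', hj'u⟩ := mem_progression.1 hu'
    have hj't := mul_lt_of_lt_of_mul_lt_add hj' htM
    rw [add_assoc, ← Nat.cast_add, add_right_inj] at hj'u
    have hj'a := ZMod.natCast_inj_of_lt hj't (by omega) hj'u
    have hjj : j' = j := eq_of_mul_le_mul_add_pred ht (by omega) (by omega)
    rw [add_assoc, ← Nat.cast_add, ← hj'a, hjj]

theorem le_card_of_isVertexCover (htn : t ≤ n) (htM : M * t < n + t) {C : Finset (ZMod n)}
    (hC : IsVertexCover (pathHyperedges n t) C) : M ≤ #C := by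
  have hcard := le_mul_card_of_isVertexCover htn hC
  by_contra! hlt
  have : (#C + 1) * t ≤ M * t := Nat.mul_le_mul_right t hlt
  rw [add_one_mul, mul_comm] at this
  omega

theorem card_filter_mem_progression (ht : 0 < t) (htM : M * t < n + t) (v : ZMod n) :
    #{i | v ∈ progression n t M i} = M := by
  refine card_filter_mem_image_add (fun j j' h => Fin.ext ?_) v
  exact Nat.eq_of_mul_eq_mul_right ht (ZMod.natCast_inj_of_lt (mul_lt_of_lt_of_mul_lt_add j.2 htM)
    (mul_lt_of_lt_of_mul_lt_add j'.2 htM) h)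

variable {R : Type*} [CommRing R] [IsDomain R]

theorem mul_le_mul_totalDegree_of_mem_symbolicPower (htn : t ≤ n) (hMt : n ≤ M * t)
    (htM : M * t < n + t) {m : ℕ} {f : MvPolynomial (ZMod n) R}
    (hf : f ∈ symbolicPower (edgeIdeal R (pathHyperedges n t)) m) (hf0 : f ≠ 0) :
    n * m ≤ M * f.totalDegree := by
  obtain ⟨d, hd⟩ := support_nonempty.2 hf0
  have hdeg : ∀ i, m ≤ degreeIn (progression n t M i) d := fun i =>
    mem_varsIdeal_pow_iff.1 (mem_symbolicPower_edgeIdeal_iff.1 hf _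
      (minimal_isVertexCover_progression htn hMt htM i)) d hd
  calc n * m = ∑ _i : ZMod n, m := by simp
    _ ≤ ∑ i, degreeIn (progression n t M i) d := sum_le_sum fun i _ => hdeg i
    _ = M * ∑ v, d v := sum_sum_eq_mul_sum_of_card_filter_mem
        (card_filter_mem_progression (pos_and_pos_of_le_mul hMt).2 htM) _
    _ ≤ M * f.totalDegree := by
      gcongr
      simpa [Finsupp.sum_fintype] using le_totalDegree hd

theorem exists_mem_symbolicPower_totalDegree_eq (htn : t ≤ n) (hMt : n ≤ M * t)
    (htM : M * t < n + t) (m : ℕ) :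
    ∃ f ∈ symbolicPower (edgeIdeal R (pathHyperedges n t)) m, f ≠ 0 ∧
      f.totalDegree = n * (m / M + 1) := by
  set c := m / M + 1
  set D : ZMod n →₀ ℕ := Finsupp.equivFunOnFinite.symm fun _ => c
  refine ⟨monomial D 1,
    mem_symbolicPower_edgeIdeal_iff.2 fun C hC => monomial_mem_varsIdeal_pow 1 ?_, by simp, ?_⟩
  · have hM := le_card_of_isVertexCover htn htM hC.prop
    have hm := Nat.lt_div_mul_add (a := m) (pos_and_pos_of_le_mul hMt).1
    calc m ≤ c * M := by rw [add_one_mul]; omega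
      _ ≤ c * #C := Nat.mul_le_mul_left c hM
      _ = degreeIn C D := by simp [degreeIn, D, mul_comm]
  · simp [totalDegree_monomial, Finsupp.sum_fintype, D]

end Cycle

section Waldschmidt

open Filter Topology

theorem alphaIdeal_le_totalDegree {k V : Type*} [CommRing k] {J : Ideal (MvPolynomial V k)}
    {f : MvPolynomial V k} (hf : f ∈ J) (hf0 : f ≠ 0) : alphaIdeal J ≤ f.totalDegree :=
  Nat.sInf_le ⟨f, hf, hf0, rfl⟩

theorem exists_totalDegree_eq_alphaIdeal {k V : Type*} [CommRing k]
    {J : Ideal (MvPolynomial V k)} (hJ : ∃ f ∈ J, f ≠ 0) :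
    ∃ f ∈ J, f ≠ 0 ∧ f.totalDegree = alphaIdeal J := by
  obtain ⟨f, hf, hf0⟩ := hJ
  exact Nat.sInf_mem (s := {d | ∃ f ∈ J, f ≠ 0 ∧ f.totalDegree = d}) ⟨_, f, hf, hf0, rfl⟩

theorem tendsto_div_of_mul_le_of_le_mul_add {a : ℕ → ℝ} {c b : ℝ} (hlow : ∀ m, c * m ≤ a m)
    (hup : ∀ m, a m ≤ c * m + b) : Tendsto (fun m : ℕ => a m / m) atTop (𝓝 c) := by
  have hlim : Tendsto (fun m : ℕ => c + b / m) atTop (𝓝 c) := by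
    simpa using tendsto_const_nhds.add (tendsto_const_div_atTop_nhds_zero_nat b)
  refine tendsto_of_tendsto_of_tendsto_of_le_of_le' tendsto_const_nhds hlim ?_ ?_ <;>
    filter_upwards [eventually_gt_atTop 0] with m hm <;>
    have hm' : (0 : ℝ) < m := by exact_mod_cast hm
  · rw [le_div_iff₀ hm']
    exact hlow m
  · rw [div_le_iff₀ hm', add_mul, div_mul_cancel₀ _ hm'.ne']
    exact hup m

variable {k : Type*} [Field k] {n t M : ℕ} [NeZero n]

theorem tendsto_alphaIdeal_symbolicPower_div (htn : t ≤ n) (hMt : n ≤ M * t)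
    (htM : M * t < n + t) :
    Tendsto
      (fun m : ℕ => (alphaIdeal (symbolicPower (edgeIdeal k (pathHyperedges n t)) m) : ℝ) / m)
      atTop (𝓝 (n / M)) := by
  have hM : (0 : ℝ) < M := by exact_mod_cast (pos_and_pos_of_le_mul hMt).1
  refine tendsto_div_of_mul_le_of_le_mul_add (b := n) (fun m => ?_) (fun m => ?_) <;>
    obtain ⟨g, hg, hg0, hgdeg⟩ := exists_mem_symbolicPower_totalDegree_eq (R := k) htn hMt htM m
  · obtain ⟨f, hf, hf0, hdeg⟩ := exists_totalDegree_eq_alphaIdeal ⟨g, hg, hg0⟩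
    have hlow := mul_le_mul_totalDegree_of_mem_symbolicPower htn hMt htM hf hf0
    rw [hdeg] at hlow
    rw [div_mul_eq_mul_div, div_le_iff₀' hM]
    exact_mod_cast hlow
  · have hle := alphaIdeal_le_totalDegree hg hg0
    rw [hgdeg] at hle
    have hdiv : ((m / M : ℕ) : ℝ) ≤ m / M := Nat.cast_div_le
    calc (alphaIdeal _ : ℝ) ≤ n * ((m / M : ℕ) + 1) := by exact_mod_cast hle
      _ ≤ n * (m / M + 1) := by gcongr
      _ = n / M * m + n := by ring

end Waldschmidt

theorem stmt14_general {k : Type*} [Field k] (n t q r : ℕ) [NeZero n]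
    (htn : t ≤ n) (hq : n = t * q + r) (hr : r < t) :
    Filter.Tendsto
      (fun m : ℕ =>
        (alphaIdeal (symbolicPower (edgeIdeal k (pathHyperedges n t)) m) : ℝ) / m)
      Filter.atTop
      (nhds (if r = 0 then (t : ℝ) else (n : ℝ) / ((q : ℝ) + 1))) := by
  have hqt : q * t = t * q := mul_comm q t
  have hq0 : 0 < q := Nat.pos_of_ne_zero fun h => by simp [h] at hq; omega
  split_ifs with hr0
  · have hM : t = (n : ℝ) / q := by
      rw [eq_div_iff (by positivity)]
      exact_mod_cast (by omega : t * q = n)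
    rw [hM]
    exact tendsto_alphaIdeal_symbolicPower_div htn (by omega) (by omega)
  · have hqt' : (q + 1) * t = t * q + t := by rw [add_one_mul, hqt]
    exact_mod_cast tendsto_alphaIdeal_symbolicPower_div (M := q + 1) htn (by omega) (by omega)

/-- the Waldschmidt constant of the t-path ideal of the cycle Cₙ,
where n = t*q + r with 0 ≤ r < t, equals t if r = 0 and n/(q+1) otherwise. -/
theorem stmt14 {k : Type*} [Field k] (n t q r : ℕ) [NeZero n] (hn : 2 ≤ n)
    (ht : 2 ≤ t) (htn : t ≤ n) (hq : n = t * q + r) (hr : r < t) :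
    Filter.Tendsto
      (fun m : ℕ =>
        (alphaIdeal (symbolicPower (edgeIdeal k (pathHyperedges n t)) m) : ℝ) / m)
      Filter.atTop
      (nhds (if r = 0 then (t : ℝ) else (n : ℝ) / ((q : ℝ) + 1))) :=
  stmt14_general n t q r htn hq hr
end
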